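/- arXiv:2601.06382 — 2 statements merged into one kernel-verified Lean document; each statement's English description precedes it below -/
import Mathlib

section
/- Let T, R, P, S be real numbers satisfying the Prisoner's Dilemma inequalities T > R > P > S, and let x > 0 be any fixed token value (in particular one satisfying the MATE cooperation condition x ≥ max{P − S, (T − R)/3}). Then there exist c > 0 and b ∈ ℝ such that the transformed payoffs T' = c·T + b, R' = c·R + b, P' = c·P + b, S' = c·S + b still satisfy T' > R' > P' > S', yet max{P' − S', (T' − R')/3} > x, so the MATE cooperation condition x ≥ max{P' − S', (T' − R')/3} fails for the transformed payoffs. Hence MATE with a fixed token is not invariant to positive affine reward changes in the general PD. -/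
/-! The MATE threshold `max (P - S) ((T - R) / 3)` ignores a common shift of the payoffs and scales
linearly with a positive factor, while the token `x` stays fixed. Since the threshold of a Prisoner's
Dilemma is positive, scaling the payoffs by a large enough factor pushes it above `x`, and a positive
scaling preserves the PD inequalities. -/

section

variable {𝕜 : Type*} [Field 𝕜] [LinearOrder 𝕜] [IsStrictOrderedRing 𝕜]

def IsPrisonersDilemma {α : Type*} [LT α] (T R P S : α) : Prop :=
  T > R ∧ R > P ∧ P > S

def mateThreshold (T R P S : 𝕜) : 𝕜 :=
  max (P - S) ((T - R) / 3)

theorem IsPrisonersDilemma.map {α β : Type*} [Preorder α] [Preorder β] {f : α → β}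
    (hf : StrictMono f) {T R P S : α} (h : IsPrisonersDilemma T R P S) :
    IsPrisonersDilemma (f T) (f R) (f P) (f S) :=
  ⟨hf h.1, hf h.2.1, hf h.2.2⟩

theorem IsPrisonersDilemma.mateThreshold_pos {T R P S : 𝕜} (h : IsPrisonersDilemma T R P S) :
    0 < mateThreshold T R P S :=
  lt_max_of_lt_left (sub_pos.2 h.2.2)

theorem strictMono_mul_add {c : 𝕜} (hc : 0 < c) (b : 𝕜) : StrictMono fun r ↦ c * r + b :=
  (strictMono_mul_left_of_pos hc).add_const b

theorem mateThreshold_mul_add {c : 𝕜} (hc : 0 ≤ c) (b T R P S : 𝕜) :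
    mateThreshold (c * T + b) (c * R + b) (c * P + b) (c * S + b) = c * mateThreshold T R P S := by
  simp only [mateThreshold, add_sub_add_right_eq_sub, ← mul_sub, mul_div_assoc,
    mul_max_of_nonneg _ _ hc]

end

theorem mate_not_invariant_to_affine_changes_general (T R P S x : ℝ)
    (hTR : T > R) (hRP : R > P) (hPS : P > S) :
    ∃ c b : ℝ, c > 0 ∧
      (c * T + b > c * R + b ∧ c * R + b > c * P + b ∧ c * P + b > c * S + b) ∧
      max ((c * P + b) - (c * S + b)) (((c * T + b) - (c * R + b)) / 3) > x ∧
      ¬ (x ≥ max ((c * P + b) - (c * S + b)) (((c * T + b) - (c * R + b)) / 3)) := by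
  have hPD : IsPrisonersDilemma T R P S := ⟨hTR, hRP, hPS⟩
  obtain ⟨c, hc, hxc⟩ := exists_pos_lt_mul hPD.mateThreshold_pos x
  have hfail : mateThreshold (c * T + 0) (c * R + 0) (c * P + 0) (c * S + 0) > x := by
    rwa [mateThreshold_mul_add hc.le]
  exact ⟨c, 0, hc, hPD.map (strictMono_mul_add hc 0), hfail, not_le.2 hfail⟩

/-- MATE with a fixed token is not invariant to positive affine
reward changes in the general PD: for any PD payoffs `T > R > P > S` and any
fixed token `x > 0` (in particular one satisfying the MATE cooperation
condition `x ≥ max {P − S, (T − R)/3}`), there is a positive affine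
transformation `r ↦ c * r + b` preserving the PD inequalities for which the
MATE cooperation condition fails. -/
theorem mate_not_invariant_to_affine_changes (T R P S x : ℝ)
    (hTR : T > R) (hRP : R > P) (hPS : P > S) (hx : x > 0)
    (hmate : x ≥ max (P - S) ((T - R) / 3)) :
    ∃ c b : ℝ, c > 0 ∧
      (c * T + b > c * R + b ∧ c * R + b > c * P + b ∧ c * P + b > c * S + b) ∧
      max ((c * P + b) - (c * S + b)) (((c * T + b) - (c * R + b)) / 3) > x ∧
      ¬ (x ≥ max ((c * P + b) - (c * S + b)) (((c * T + b) - (c * R + b)) / 3)) :=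
  mate_not_invariant_to_affine_changes_general T R P S x hTR hRP hPS
end

section
/- Let J and K be nonempty finite index sets, let û_i, ū_i be real numbers, let (û_j)_{j∈J} and (ū_k)_{k∈K} be families of real numbers, and let c > 0 and b ∈ ℝ. Define the DRIVE-shaped reward D = û_i − min_{j∈J}(ū_i − û_j) + min_{k∈K}(ū_k − û_i). Let D' be the shaped reward computed from the transformed data, i.e., D' = (c·û_i + b) − min_{j∈J}((c·ū_i + b) − (c·û_j + b)) + min_{k∈K}((c·ū_k + b) − (c·û_i + b)). Then D' = c·D + b; that is, the DRIVE shaping rule is equivariant under shared positive affine reward transformations. -/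
lemma inf'_const_mul {ι : Type*} (s : Finset ι) (hs : s.Nonempty) (f : ι → ℝ)
    {c : ℝ} (hc : 0 < c) :
    s.inf' hs (fun j => c * f j) = c * s.inf' hs f := by
  have := Finset.apply_inf'_eq_inf'_comp hs (f := f) (g := fun x => c * x)
    (fun x y => by
      rcases le_total x y with h | h
      · simp [inf_eq_left.2 h, inf_eq_left.2 (mul_le_mul_of_nonneg_left h hc.le)]
      · simp [inf_eq_right.2 h, inf_eq_right.2 (mul_le_mul_of_nonneg_left h hc.le)])
  simpa [Function.comp] using this.symm

/-- The DRIVE shaping rule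
`D = û_i − min_{j∈J}(ū_i − û_j) + min_{k∈K}(ū_k − û_i)`
is equivariant under shared positive affine reward transformations
`r ↦ c * r + b` with `c > 0`: the shaped reward `D'` computed from the
transformed rewards satisfies `D' = c * D + b`. -/
theorem drive_shaping_affine_equivariant {ι κ : Type*}
    (J : Finset ι) (K : Finset κ) (hJ : J.Nonempty) (hK : K.Nonempty)
    (uhati ubari : ℝ) (uhat : ι → ℝ) (ubar : κ → ℝ)
    (c b : ℝ) (hc : c > 0)
    (D D' : ℝ)
    (hD : D = uhati - J.inf' hJ (fun j => ubari - uhat j)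
              + K.inf' hK (fun k => ubar k - uhati))
    (hD' : D' = (c * uhati + b)
              - J.inf' hJ (fun j => (c * ubari + b) - (c * uhat j + b))
              + K.inf' hK (fun k => (c * ubar k + b) - (c * uhati + b))) :
    D' = c * D + b := by
  have h1 : (fun j => (c * ubari + b) - (c * uhat j + b)) = fun j => c * (ubari - uhat j) := by
    funext j; ring
  have h2 : (fun k => (c * ubar k + b) - (c * uhati + b)) = fun k => c * (ubar k - uhati) := by
    funext k; ring
  rw [hD', hD, h1, h2, inf'_const_mul J hJ _ hc, inf'_const_mul K hK _ hc]
  ring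
end
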